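/- arXiv:2110.03773 — 7 statements merged into one kernel-verified Lean document; each statement's English description precedes it below -/
import Mathlib

section
/- For every n ≥ 1, the graph B_{n,K_3} satisfies ι(B_{n,K_3}, 𝓒) = ⌊n/4⌋. -/
open SimpleGraph

/-- `G` contains a copy of `H` as a (not necessarily induced) subgraph. -/
def SimpleGraph.ContainsCopy {V W : Type*} (G : SimpleGraph V) (H : SimpleGraph W) : Prop :=
  ∃ f : W ↪ V, ∀ a b, H.Adj a b → G.Adj (f a) (f b)

/-- The closed neighbourhood `N[D]` of a set `D` of vertices. -/
def SimpleGraph.closedNbhdSet {V : Type*} (G : SimpleGraph V) (D : Set V) : Set V :=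
  D ∪ ⋃ v ∈ D, G.neighborSet v

/-- `D` is an `F`-isolating set of `G`: the graph `G − N[D]` obtained by deleting the closed
neighbourhood of `D` contains no subgraph isomorphic to a member of the family `F`. -/
def SimpleGraph.IsIsolatingSet {V : Type*} (G : SimpleGraph V)
    (F : Set ((n : ℕ) × SimpleGraph (Fin n))) (D : Set V) : Prop :=
  ∀ H ∈ F, ¬ (G.induce (G.closedNbhdSet D)ᶜ).ContainsCopy H.2

/-- The `F`-isolation number of `G`: the minimum size of an `F`-isolating set. -/
noncomputable def SimpleGraph.isolationNumber {V : Type*} (G : SimpleGraph V)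
    (F : Set ((n : ℕ) × SimpleGraph (Fin n))) : ℕ :=
  sInf (Set.ncard '' {D : Set V | G.IsIsolatingSet F D})

/-- The family 𝓒 of all cycles `C_m`, `m ≥ 3`. -/
def CyclesFamily : Set ((n : ℕ) × SimpleGraph (Fin n)) :=
  {H | ∃ m : ℕ, 3 ≤ m ∧ H = ⟨m, SimpleGraph.cycleGraph m⟩}

/-- The family 𝓔_k of all connected graphs with at least `k` edges. -/
def EkFamily (k : ℕ) : Set ((n : ℕ) × SimpleGraph (Fin n)) :=
  {H | H.2.Connected ∧ k ≤ H.2.edgeSet.ncard}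

/-- The set of leaves (vertices of degree 1) of `G`. -/
def SimpleGraph.leafSet {V : Type*} (G : SimpleGraph V) : Set V :=
  {v | (G.neighborSet v).ncard = 1}

/-- `ℓ(G)`, the number of leaves of `G`. -/
noncomputable def SimpleGraph.numLeaves {V : Type*} (G : SimpleGraph V) : ℕ :=
  G.leafSet.ncard

/-- Adjacency (one direction) for the graph `B_{n,K_3}` on vertex labels `0, …, n−1`:
for `n ≤ 3` it is the path `P_n`; for `n ≥ 4`, with `a = ⌊n/4⌋` and `b = n − 3a`,
vertices `0, …, a−1` form a path, vertices `a, …, b−1` are joined to `a−1`, and for each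
`i < a` the vertices `b+3i, b+3i+1, b+3i+2` form a triangle (a copy of `K_3`) each of whose
vertices is joined to `i`. -/
def BK3Adj (n x y : ℕ) : Prop :=
  if n ≤ 3 then y = x + 1
  else
    (y = x + 1 ∧ x + 1 < n / 4) ∨
    (x = n / 4 - 1 ∧ n / 4 ≤ y ∧ y < n - 3 * (n / 4)) ∨
    (∃ i < n / 4, n - 3 * (n / 4) + 3 * i ≤ x ∧ x < y ∧ y < n - 3 * (n / 4) + 3 * i + 3) ∨
    (∃ i < n / 4, x = i ∧ n - 3 * (n / 4) + 3 * i ≤ y ∧ y < n - 3 * (n / 4) + 3 * i + 3)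

/-- The graph `B_{n,K_3}`. -/
def BK3 (n : ℕ) : SimpleGraph (Fin n) :=
  SimpleGraph.fromRel (fun x y => BK3Adj n x.1 y.1)

lemma BK3Adj_iff {n x y : ℕ} (h : ¬ n ≤ 3) : BK3Adj n x y ↔
    ((y = x + 1 ∧ x + 1 < n / 4) ∨
    (x = n / 4 - 1 ∧ n / 4 ≤ y ∧ y < n - 3 * (n / 4)) ∨
    (∃ i < n / 4, n - 3 * (n / 4) + 3 * i ≤ x ∧ x < y ∧ y < n - 3 * (n / 4) + 3 * i + 3) ∨
    (∃ i < n / 4, x = i ∧ n - 3 * (n / 4) + 3 * i ≤ y ∧ y < n - 3 * (n / 4) + 3 * i + 3)) := by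
  rw [BK3Adj, if_neg h]

lemma adj_triangle {n : ℕ} (h4 : 4 ≤ n) {d t : Fin n} {i : ℕ} (hi : i < n / 4)
    (ht1 : n - 3 * (n / 4) + 3 * i ≤ t.1) (ht2 : t.1 < n - 3 * (n / 4) + 3 * i + 3)
    (hadj : (BK3 n).Adj d t) :
    d.1 = i ∨ (n - 3 * (n / 4) + 3 * i ≤ d.1 ∧ d.1 < n - 3 * (n / 4) + 3 * i + 3) := by
  rw [BK3, fromRel_adj] at hadj
  obtain ⟨hne, hr⟩ := hadj
  have hdm := Nat.div_add_mod n 4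
  have hlt : n % 4 < 4 := Nat.mod_lt _ (by omega)
  simp only [BK3Adj_iff (show ¬ n ≤ 3 by omega)] at hr
  rcases hr with (⟨h1, h2⟩ | ⟨h1, h2, h3⟩ | ⟨i', hi', h1, h2, h3⟩ | ⟨i', hi', h1, h2, h3⟩) |
    (⟨h1, h2⟩ | ⟨h1, h2, h3⟩ | ⟨i', hi', h1, h2, h3⟩ | ⟨i', hi', h1, h2, h3⟩) <;> omega

lemma triangle_adj {n : ℕ} (h4 : 4 ≤ n) {i : ℕ} (hi : i < n / 4) {u v : Fin n}
    (h1 : n - 3 * (n / 4) + 3 * i ≤ u.1) (h2 : u.1 < v.1)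
    (h3 : v.1 < n - 3 * (n / 4) + 3 * i + 3) : (BK3 n).Adj u v := by
  rw [BK3, fromRel_adj]
  refine ⟨fun h => by simp [h] at h2, Or.inl ?_⟩
  rw [BK3Adj_iff (by omega)]
  exact Or.inr (Or.inr (Or.inl ⟨i, hi, h1, h2, h3⟩))

theorem stmt_1 (n : ℕ) (hn : 1 ≤ n) :
    (BK3 n).isolationNumber CyclesFamily = n / 4 := by
  have hdm := Nat.div_add_mod n 4
  have hltm : n % 4 < 4 := Nat.mod_lt _ (by omega)
  by_cases h3 : n ≤ 3
  · -- small case: path, isolation number 0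
    have h40 : n / 4 = 0 := by omega
    rw [h40]
    have hiso : (BK3 n).IsIsolatingSet CyclesFamily ∅ := by
      rintro H hmem ⟨f, hf⟩
      obtain ⟨m', hm', rfl⟩ := hmem
      have hle : m' ≤ n := by
        simpa using Fintype.card_le_of_embedding (f.trans (Function.Embedding.subtype _))
      have hm3 : m' = 3 ∧ n = 3 := by omega
      obtain ⟨rfl, rfl⟩ := hm3
      -- f : Fin 3 ↪ subtype, composite is bijective
      set e : Fin 3 ↪ Fin 3 := f.trans (Function.Embedding.subtype _) with he
      have hbij : Function.Bijective e := Finite.injective_iff_bijective.mp e.injective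
      obtain ⟨p, hp⟩ := hbij.surjective 0
      obtain ⟨q, hq⟩ := hbij.surjective 2
      have hpq : p ≠ q := by rintro rfl; rw [hp] at hq; exact absurd hq (by decide)
      have hadjall : ∀ p q : Fin 3, p ≠ q → (cycleGraph 3).Adj p q := by decide
      have hadj : (cycleGraph 3).Adj p q := hadjall p q hpq
      have hGadj : (BK3 3).Adj (e p) (e q) := hf p q hadj
      rw [hp, hq, BK3, fromRel_adj] at hGadj
      obtain ⟨-, hr⟩ := hGadj
      simp [BK3Adj] at hr
    have h0 : 0 ∈ Set.ncard '' {D : Set (Fin n) | (BK3 n).IsIsolatingSet CyclesFamily D} :=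
      ⟨∅, hiso, Set.ncard_empty _⟩
    exact Nat.eq_zero_of_le_zero (Nat.sInf_le h0)
  · -- main case n ≥ 4
    push_neg at h3
    set a := n / 4 with ha
    set b := n - 3 * a with hb
    have ha1 : 1 ≤ a := by omega
    have hab : b + 3 * a = n := by omega
    have hab2 : a ≤ b := by omega
    -- the path set D₀
    set D₀ : Set (Fin n) := {v : Fin n | v.1 < a} with hD₀
    have hD₀card : D₀.ncard = a := by
      rw [← Nat.card_coe_set_eq]
      have : D₀ ≃ Fin a :=
        { toFun := fun v => ⟨v.1.1, v.2⟩
          invFun := fun k => ⟨⟨k.1, by omega⟩, k.2⟩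
          left_inv := fun v => by ext; rfl
          right_inv := fun k => rfl }
      rw [Nat.card_congr this, Nat.card_eq_fintype_card, Fintype.card_fin]
    have hD₀univ : (BK3 n).closedNbhdSet D₀ = Set.univ := by
      ext v
      simp only [Set.mem_univ, iff_true, SimpleGraph.closedNbhdSet, Set.mem_union,
        Set.mem_iUnion, SimpleGraph.mem_neighborSet]
      by_cases hv : v.1 < a
      · exact Or.inl hv
      · right
        push_neg at hv
        by_cases hvb : v.1 < b
        · refine ⟨⟨a - 1, by omega⟩, by simp [hD₀]; omega, ?_⟩
          rw [BK3, fromRel_adj]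
          refine ⟨fun h => by
            have : a - 1 = v.1 := congrArg Fin.val h
            omega, Or.inl ?_⟩
          rw [BK3Adj_iff (by omega)]
          exact Or.inr (Or.inl ⟨rfl, by omega, by omega⟩)
        · push_neg at hvb
          set i := (v.1 - b) / 3 with hi
          have hdm3 := Nat.div_add_mod (v.1 - b) 3
          have hm3 : (v.1 - b) % 3 < 3 := Nat.mod_lt _ (by omega)
          have hvn : v.1 < n := v.2
          refine ⟨⟨i, by omega⟩, by simp [hD₀]; omega, ?_⟩
          rw [BK3, fromRel_adj]
          refine ⟨fun h => by
            have : i = v.1 := congrArg Fin.val h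
            omega, Or.inl ?_⟩
          rw [BK3Adj_iff (by omega)]
          exact Or.inr (Or.inr (Or.inr ⟨i, by omega, rfl, by omega, by omega⟩))
    have hD₀iso : (BK3 n).IsIsolatingSet CyclesFamily D₀ := by
      rintro H hmem ⟨f, hf⟩
      obtain ⟨m', hm', rfl⟩ := hmem
      have h0m : 0 < (⟨m', cycleGraph m'⟩ : (k : ℕ) × SimpleGraph (Fin k)).fst := by
        show 0 < m'; omega
      have hall : ∀ x : Fin n, x ∈ (BK3 n).closedNbhdSet D₀ := by
        intro x; rw [hD₀univ]; trivial
      exact (f ⟨0, h0m⟩).2 (hall _)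
    have hmem : a ∈ Set.ncard '' {D : Set (Fin n) | (BK3 n).IsIsolatingSet CyclesFamily D} :=
      ⟨D₀, hD₀iso, hD₀card⟩
    refine le_antisymm (Nat.sInf_le hmem) ?_
    refine le_csInf ⟨a, hmem⟩ ?_
    rintro x ⟨D, hD, rfl⟩
    -- lower bound: every isolating set has size ≥ a
    have key : ∀ i : Fin a, ∃ v : Fin n, v ∈ D ∧
        (v.1 = i.1 ∨ (b + 3 * i.1 ≤ v.1 ∧ v.1 < b + 3 * i.1 + 3)) := by
      intro i
      by_contra hcon
      push_neg at hcon
      -- the triangle survives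
      have hu : ∀ k : Fin 3, b + 3 * i.1 + k.1 < n := by
        intro k; have := i.2; have := k.2; omega
      set u : Fin 3 → Fin n := fun k => ⟨b + 3 * i.1 + k.1, hu k⟩ with huu
      have huval : ∀ k : Fin 3, (u k).1 = b + 3 * i.1 + k.1 := by
        intro k; rw [huu]
      have hcompl : ∀ k, u k ∈ ((BK3 n).closedNbhdSet D)ᶜ := by
        intro k
        simp only [Set.mem_compl_iff, SimpleGraph.closedNbhdSet, Set.mem_union,
          Set.mem_iUnion, SimpleGraph.mem_neighborSet]
        push_neg
        constructor
        · intro hmemD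
          have := hcon _ hmemD
          have hk := k.2
          rw [huval] at this
          omega
        · intro d hdD hadj
          have := adj_triangle (by omega) i.2 (t := u k)
            (by rw [huval]; omega) (by rw [huval]; have := k.2; omega) hadj
          have h2 := hcon d hdD
          rcases this with h | h
          · exact h2.1 h
          · omega
      have hiB : i.1 < n / 4 := i.2
      have hBb : n - 3 * (n / 4) = b := by omega
      have hadj3 : ∀ p q : Fin 3, p ≠ q → (BK3 n).Adj (u p) (u q) := by
        intro p q hpq
        rcases Nat.lt_or_ge p.1 q.1 with h | h
        · exact triangle_adj (by omega) hiB (by rw [huval]; omega)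
            (by rw [huval, huval]; omega) (by rw [huval]; have := q.2; omega)
        · have hlt : q.1 < p.1 := by
            rcases Nat.lt_or_ge q.1 p.1 with h' | h'
            · exact h'
            · exact absurd (Fin.ext (by omega)) hpq
          exact (triangle_adj (by omega) hiB (by rw [huval]; omega)
            (by rw [huval, huval]; omega) (by rw [huval]; have := p.2; omega)).symm
      have hC3 : (⟨3, cycleGraph 3⟩ : (n : ℕ) × SimpleGraph (Fin n)) ∈ CyclesFamily :=
        ⟨3, le_refl 3, rfl⟩
      refine hD _ hC3 ⟨⟨fun k => ⟨u k, hcompl k⟩, ?_⟩, ?_⟩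
      · intro p q hpq
        simp only [Subtype.mk_eq_mk] at hpq
        have : (u p).1 = (u q).1 := congrArg Fin.val hpq
        rw [huval, huval] at this
        exact Fin.ext (by omega)
      · intro p q hpq
        exact hadj3 p q hpq.ne
    choose g hg using key
    have hginj : Function.Injective (fun i : Fin a => (⟨g i, (hg i).1⟩ : D)) := by
      intro i j hij
      simp only [Subtype.mk_eq_mk] at hij
      have h1 := (hg i).2
      have h2 := (hg j).2
      rw [hij] at h1
      have hi := i.2; have hj := j.2
      exact Fin.ext (by omega)
    have := Nat.card_le_card_of_injective _ hginj
    rwa [Nat.card_eq_fintype_card, Fintype.card_fin, Nat.card_coe_set_eq] at this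
end

section
/- For every n with n ≤ 2 or n ≥ 5, the graph B'_{n,P_3} satisfies ι_2(B'_{n,P_3}) = ⌊(4n − ℓ(B'_{n,P_3}))/14⌋, where ℓ(B'_{n,P_3}) is the number of leaves of B'_{n,P_3}. -/
open SimpleGraph

/-- Adjacency (one direction) for the graph `B'_{n,P_3}` on vertex labels `0, …, n−1`:
for `n ≤ 3` it is the path `P_n`; for `n ≥ 4`, with `a = ⌊n/4⌋` and `b = n − 3a`,
vertices `0, …, a−1` form a path, vertices `a, …, b−1` are joined to `a−1`, and for each
`i < a` the vertices `b+3i, b+3i+1, b+3i+2` form a copy of `P_3` with centre `b+3i+1`,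
which is joined to `i`. -/
def BpP3Adj (n x y : ℕ) : Prop :=
  if n ≤ 3 then y = x + 1
  else
    (y = x + 1 ∧ x + 1 < n / 4) ∨
    (x = n / 4 - 1 ∧ n / 4 ≤ y ∧ y < n - 3 * (n / 4)) ∨
    (∃ i < n / 4, (x = n - 3 * (n / 4) + 3 * i ∧ y = x + 1) ∨
                  (x = n - 3 * (n / 4) + 3 * i + 1 ∧ y = x + 1)) ∨
    (∃ i < n / 4, x = i ∧ y = n - 3 * (n / 4) + 3 * i + 1)

/-- The graph `B'_{n,P_3}`. -/
def BpP3 (n : ℕ) : SimpleGraph (Fin n) :=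
  SimpleGraph.fromRel (fun x y => BpP3Adj n x.1 y.1)

/-!
Write `a = ⌊n/4⌋` and `b = n − 3a`. For `n ≥ 5` the leaves of `B'_{n,P_3}` are the `n mod 4`
vertices `a, …, b−1` pendant at `a−1` and the two ends of each copy of `P_3`; the path vertices
and the centres have two neighbours. Hence `ℓ = n mod 4 + 2a` and `⌊(4n − ℓ)/14⌋ = a`.

The path `{0, …, a−1}` is `𝓔_2`-isolating: outside its closed neighbourhood only ends of copies of
`P_3` survive, and these are pairwise non-adjacent. Conversely, each copy `F_i` is a `P_3`, so an
`𝓔_2`-isolating set must dominate one of its vertices and therefore meet `{i} ∪ V(F_i)`; these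
`a` sets are pairwise disjoint. For `n ≤ 2` the graph has at most one edge.
-/

namespace SimpleGraph

variable {V : Type*} {G : SimpleGraph V} {D : Set V}

theorem containsCopy_iff_isContained {W : Type*} {H : SimpleGraph W} :
    G.ContainsCopy H ↔ H ⊑ G := by
  rw [isContained_iff_exists_le_comap]
  rfl

theorem mem_closedNbhdSet_iff {v : V} :
    v ∈ G.closedNbhdSet D ↔ v ∈ D ∨ ∃ d ∈ D, G.Adj d v := by
  simp [closedNbhdSet]

theorem isolationNumber_eq_of_isIsolatingSet {F : Set ((n : ℕ) × SimpleGraph (Fin n))} {m : ℕ}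
    (hD : G.IsIsolatingSet F D) (hcard : D.ncard = m)
    (hmin : ∀ D', G.IsIsolatingSet F D' → m ≤ D'.ncard) : G.isolationNumber F = m :=
  IsLeast.csInf_eq ⟨⟨D, hD, hcard⟩, by rintro _ ⟨D', hD', rfl⟩; exact hmin D' hD'⟩

theorem isIsolatingSet_ekFamily_of_card_choose_two_lt [Finite V] {k : ℕ}
    (hV : (Nat.card V).choose 2 < k) : G.IsIsolatingSet (EkFamily k) D := by
  classical
  have := Fintype.ofFinite V
  rintro ⟨m, H⟩ ⟨-, hk⟩ hcopy
  obtain ⟨f⟩ := (containsCopy_iff_isContained.1 hcopy).trans ⟨Copy.induce G _⟩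
  have hle : H.edgeSet.ncard ≤ G.edgeSet.ncard := by
    rw [← Nat.card_coe_set_eq, ← Nat.card_coe_set_eq]
    exact Nat.card_le_card_of_injective _ f.mapEdgeSet.injective
  have hG : G.edgeSet.ncard ≤ (Nat.card V).choose 2 := by
    rw [← coe_edgeFinset, Set.ncard_coe_finset, Nat.card_eq_fintype_card]
    exact card_edgeFinset_le_card_choose_two
  simp only at hk
  omega

theorem isIsolatingSet_ekFamily_of_forall_adj {k : ℕ} (hk : 1 ≤ k)
    (h : ∀ u v, G.Adj u v → u ∈ G.closedNbhdSet D ∨ v ∈ G.closedNbhdSet D) :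
    G.IsIsolatingSet (EkFamily k) D := by
  rintro ⟨m, H⟩ ⟨-, hcard⟩ ⟨f, hf⟩
  obtain ⟨e, he⟩ : H.edgeSet.Nonempty :=
    Set.nonempty_of_ncard_ne_zero (by simp only at hcard; omega)
  induction e using Sym2.ind with
  | _ a b => exact (h _ _ (hf a b he)).elim (f a).2 (f b).2

theorem pathGraph_three_mem_ekFamily_two : ⟨3, pathGraph 3⟩ ∈ EkFamily 2 := by
  refine ⟨pathGraph_connected 2, ?_⟩
  rw [← Set.ncard_pair (show s((0 : Fin 3), 1) ≠ s(1, 2) by decide)]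
  apply Set.ncard_le_ncard _ (Set.toFinite _)
  rintro e (rfl | rfl) <;> simp [pathGraph_adj]

theorem IsIsolatingSet.mem_closedNbhdSet_of_adj_of_adj
    (hD : G.IsIsolatingSet (EkFamily 2) D) {u v w : V}
    (huv : G.Adj u v) (hvw : G.Adj v w) (huw : u ≠ w) :
    u ∈ G.closedNbhdSet D ∨ v ∈ G.closedNbhdSet D ∨ w ∈ G.closedNbhdSet D := by
  by_contra! h
  obtain ⟨hu, hv, hw⟩ := h
  let f : Fin 3 → ↥(G.closedNbhdSet D)ᶜ := ![⟨u, hu⟩, ⟨v, hv⟩, ⟨w, hw⟩]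
  have hf : Function.Injective f := by
    intro i j hij
    fin_cases i <;> fin_cases j <;>
      simp_all [f, huv.ne, hvw.ne, huv.ne.symm, hvw.ne.symm, Ne.symm huw]
  refine hD _ pathGraph_three_mem_ekFamily_two ⟨⟨f, hf⟩, fun i j hij => ?_⟩
  fin_cases i <;> fin_cases j <;> simp_all [pathGraph_adj, f, huv.symm, hvw.symm]

theorem notMem_leafSet_of_adj [Finite V] {v u w : V} (hu : G.Adj v u) (hw : G.Adj v w)
    (huw : u ≠ w) : v ∉ G.leafSet :=
  ((Set.one_lt_ncard (Set.toFinite _)).2 ⟨u, hu, w, hw, huw⟩).ne'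

end SimpleGraph

theorem Set.le_ncard_of_Iio_subset_image {α : Type*} {s : Set α} (hs : s.Finite) {f : α → ℕ}
    {m : ℕ} (h : Set.Iio m ⊆ f '' s) : m ≤ s.ncard :=
  calc m = (Set.Iio m).ncard := (Set.ncard_Iio_nat m).symm
    _ ≤ (f '' s).ncard := Set.ncard_le_ncard h (hs.image f)
    _ ≤ s.ncard := Set.ncard_image_le hs

namespace BpP3

open SimpleGraph

variable {n : ℕ}

/-- `BpP3Adj n` for `n ≥ 4` with the copy index `i` solved for, so that `omega` decides adjacency
(it is reducible so that `omega` sees through it). -/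
abbrev AdjLabel (n x y : ℕ) : Prop :=
  (y = x + 1 ∧ x + 1 < n / 4) ∨
  (x = n / 4 - 1 ∧ n / 4 ≤ y ∧ y < n - 3 * (n / 4)) ∨
  (n - 3 * (n / 4) ≤ x ∧ x + 1 < n ∧ (x - (n - 3 * (n / 4))) % 3 ≠ 2 ∧ y = x + 1) ∨
  (x < n / 4 ∧ y = n - 3 * (n / 4) + 3 * x + 1)

theorem bpP3Adj_iff_adjLabel (hn : 4 ≤ n) {x y : ℕ} : BpP3Adj n x y ↔ AdjLabel n x y := by
  rw [BpP3Adj, if_neg (by omega), AdjLabel]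
  constructor
  · rintro (h | h | ⟨i, hi, h | h⟩ | ⟨i, hi, h⟩) <;> omega
  · rintro (h | h | h | h)
    · exact Or.inl h
    · exact Or.inr (Or.inl h)
    · exact Or.inr (Or.inr (Or.inl ⟨(x - (n - 3 * (n / 4))) / 3, by omega, by omega⟩))
    · exact Or.inr (Or.inr (Or.inr ⟨x, h.1, rfl, h.2⟩))

theorem adj_iff (hn : 4 ≤ n) {x y : Fin n} :
    (BpP3 n).Adj x y ↔ x.1 ≠ y.1 ∧ (AdjLabel n x y ∨ AdjLabel n y x) := by
  rw [BpP3, fromRel_adj, bpP3Adj_iff_adjLabel hn, bpP3Adj_iff_adjLabel hn, Ne, Fin.ext_iff]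

theorem label_cases {v : ℕ} (hv : v < n) :
    v < n / 4 ∨ (n / 4 ≤ v ∧ v < n - 3 * (n / 4)) ∨
      ∃ i < n / 4, v = n - 3 * (n / 4) + 3 * i ∨ v = n - 3 * (n / 4) + 3 * i + 1 ∨
        v = n - 3 * (n / 4) + 3 * i + 2 := by
  by_cases hb : v < n - 3 * (n / 4)
  · omega
  · exact Or.inr (Or.inr ⟨(v - (n - 3 * (n / 4))) / 3, by omega, by omega⟩)

def leafLabels (n : ℕ) : Finset ℕ :=
  Finset.Ico (n / 4) (n - 3 * (n / 4)) ∪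
    (Finset.range (n / 4)).image (fun i => n - 3 * (n / 4) + 3 * i) ∪
    (Finset.range (n / 4)).image (fun i => n - 3 * (n / 4) + 3 * i + 2)

theorem mem_leafLabels {x : ℕ} :
    x ∈ leafLabels n ↔ (n / 4 ≤ x ∧ x < n - 3 * (n / 4)) ∨
      ∃ i < n / 4, x = n - 3 * (n / 4) + 3 * i ∨ x = n - 3 * (n / 4) + 3 * i + 2 := by
  simp only [leafLabels, Finset.mem_union, Finset.mem_Ico, Finset.mem_image, Finset.mem_range]
  constructor
  · rintro ((h | ⟨i, hi, rfl⟩) | ⟨i, hi, rfl⟩)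
    exacts [Or.inl h, Or.inr ⟨i, hi, Or.inl rfl⟩, Or.inr ⟨i, hi, Or.inr rfl⟩]
  · rintro (h | ⟨i, hi, rfl | rfl⟩)
    exacts [Or.inl (Or.inl h), Or.inl (Or.inr ⟨i, hi, rfl⟩), Or.inr ⟨i, hi, rfl⟩]

theorem card_leafLabels : (leafLabels n).card = n % 4 + 2 * (n / 4) := by
  rw [leafLabels, Finset.card_union_of_disjoint, Finset.card_union_of_disjoint, Nat.card_Ico,
    Finset.card_image_of_injective _ (fun i j h => by omega),
    Finset.card_image_of_injective _ (fun i j h => by omega), Finset.card_range]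
  · omega
  all_goals
    simp only [Finset.disjoint_left, Finset.mem_union, Finset.mem_Ico, Finset.mem_image,
      Finset.mem_range]
    omega

theorem neighborSet_eq_of_extra (hn : 4 ≤ n) {v : Fin n}
    (hv : n / 4 ≤ v.1 ∧ v.1 < n - 3 * (n / 4)) :
    (BpP3 n).neighborSet v = {⟨n / 4 - 1, by omega⟩} := by
  ext w
  rw [mem_neighborSet, adj_iff hn, Set.mem_singleton_iff, Fin.ext_iff]
  dsimp only
  omega

theorem neighborSet_eq_of_copy_leaf (hn : 4 ≤ n) {v : Fin n} {i : ℕ} (hi : i < n / 4)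
    (hv : v.1 = n - 3 * (n / 4) + 3 * i ∨ v.1 = n - 3 * (n / 4) + 3 * i + 2) :
    (BpP3 n).neighborSet v = {⟨n - 3 * (n / 4) + 3 * i + 1, by omega⟩} := by
  ext w
  rw [mem_neighborSet, adj_iff hn, Set.mem_singleton_iff, Fin.ext_iff]
  dsimp only
  omega

theorem mem_leafSet_iff (hn : 5 ≤ n) {v : Fin n} : v ∈ (BpP3 n).leafSet ↔ v.1 ∈ leafLabels n := by
  rw [mem_leafLabels]
  constructor
  · intro hleaf
    rcases label_cases v.2 with hpath | hextra | ⟨i, hi, hv | hv | hv⟩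
    · exfalso
      have hcentre : (BpP3 n).Adj v ⟨n - 3 * (n / 4) + 3 * v + 1, by omega⟩ := by
        rw [adj_iff (by omega)]; dsimp only; omega
      -- if `v + 1 ≥ b` then `n = 4a` and `v = a − 1 ≥ 1`, so `v − 1` is a path vertex
      by_cases hsucc : v.1 + 1 < n - 3 * (n / 4)
      · refine notMem_leafSet_of_adj hcentre (w := ⟨v + 1, by omega⟩) ?_ ?_ hleaf
        · rw [adj_iff (by omega)]; dsimp only; omega
        · simp only [ne_eq, Fin.mk.injEq]; omega
      · refine notMem_leafSet_of_adj hcentre (w := ⟨v - 1, by omega⟩) ?_ ?_ hleaf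
        · rw [adj_iff (by omega)]; dsimp only; omega
        · simp only [ne_eq, Fin.mk.injEq]; omega
    · exact Or.inl hextra
    · exact Or.inr ⟨i, hi, Or.inl hv⟩
    · refine absurd hleaf
        (notMem_leafSet_of_adj (u := ⟨v - 1, by omega⟩) (w := ⟨v + 1, by omega⟩) ?_ ?_ ?_)
      · rw [adj_iff (by omega)]; dsimp only; omega
      · rw [adj_iff (by omega)]; dsimp only; omega
      · simp only [ne_eq, Fin.mk.injEq]; omega
    · exact Or.inr ⟨i, hi, Or.inr hv⟩
  · rintro (hextra | ⟨i, hi, hv⟩)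
    · exact (congrArg Set.ncard (neighborSet_eq_of_extra (by omega) hextra)).trans
        (Set.ncard_singleton _)
    · exact (congrArg Set.ncard (neighborSet_eq_of_copy_leaf (by omega) hi hv)).trans
        (Set.ncard_singleton _)

theorem numLeaves_eq (hn : 5 ≤ n) : (BpP3 n).numLeaves = n % 4 + 2 * (n / 4) := by
  have hleaf : (BpP3 n).leafSet = Fin.val ⁻¹' (leafLabels n) := Set.ext fun _ => mem_leafSet_iff hn
  rw [numLeaves, hleaf, Set.ncard_preimage_of_injective_subset_range Fin.val_injective,
    Set.ncard_coe_finset, card_leafLabels]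
  intro x hx
  rw [Finset.mem_coe, mem_leafLabels] at hx
  exact ⟨⟨x, by omega⟩, rfl⟩

theorem ncard_pathVertices (n : ℕ) : {v : Fin n | v.1 < n / 4}.ncard = n / 4 := by
  rw [show {v : Fin n | v.1 < n / 4} = Fin.val ⁻¹' Set.Iio (n / 4) from rfl,
    Set.ncard_preimage_of_injective_subset_range Fin.val_injective, Set.ncard_Iio_nat]
  intro x hx
  exact ⟨⟨x, by simp only [Set.mem_Iio] at hx; omega⟩, rfl⟩

theorem exists_copy_leaf_of_notMem_closedNbhdSet (hn : 4 ≤ n) {v : Fin n}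
    (hv : v ∉ (BpP3 n).closedNbhdSet {v | v.1 < n / 4}) :
    ∃ i < n / 4, v.1 = n - 3 * (n / 4) + 3 * i ∨ v.1 = n - 3 * (n / 4) + 3 * i + 2 := by
  rw [mem_closedNbhdSet_iff] at hv
  rcases label_cases v.2 with hpath | hextra | ⟨i, hi, hv' | hcentre | hv'⟩
  · exact absurd (Or.inl hpath) hv
  · refine absurd (Or.inr ⟨⟨n / 4 - 1, by omega⟩, show n / 4 - 1 < n / 4 by omega, ?_⟩) hv
    rw [adj_iff hn]; dsimp only; omega
  · exact ⟨i, hi, Or.inl hv'⟩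
  · refine absurd (Or.inr ⟨⟨i, by omega⟩, show i < n / 4 from hi, ?_⟩) hv
    rw [adj_iff hn]; dsimp only; omega
  · exact ⟨i, hi, Or.inr hv'⟩

theorem isIsolatingSet_pathVertices (hn : 4 ≤ n) :
    (BpP3 n).IsIsolatingSet (EkFamily 2) {v | v.1 < n / 4} := by
  refine isIsolatingSet_ekFamily_of_forall_adj one_le_two fun u v huv => ?_
  by_contra! h
  obtain ⟨i, hi, hu⟩ := exists_copy_leaf_of_notMem_closedNbhdSet hn h.1
  obtain ⟨j, hj, hv⟩ := exists_copy_leaf_of_notMem_closedNbhdSet hn h.2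
  rw [adj_iff hn] at huv
  omega

theorem le_ncard_of_isIsolatingSet (hn : 4 ≤ n) {D : Set (Fin n)}
    (hD : (BpP3 n).IsIsolatingSet (EkFamily 2) D) : n / 4 ≤ D.ncard := by
  let copyIndex : Fin n → ℕ := fun v =>
    if v.1 < n / 4 then v.1 else (v.1 - (n - 3 * (n / 4))) / 3
  refine Set.le_ncard_of_Iio_subset_image (Set.toFinite D) (f := copyIndex) fun i hi => ?_
  rw [Set.mem_Iio] at hi
  obtain ⟨x, hx, hxi⟩ : ∃ x ∈ (BpP3 n).closedNbhdSet D,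
      n - 3 * (n / 4) + 3 * i ≤ x.1 ∧ x.1 ≤ n - 3 * (n / 4) + 3 * i + 2 := by
    have hadj : ∀ x y : Fin n, ∀ j < 2, x.1 = n - 3 * (n / 4) + 3 * i + j → y.1 = x.1 + 1 →
        (BpP3 n).Adj x y := by
      intro x y j hj hx hy; rw [adj_iff hn]; omega
    rcases hD.mem_closedNbhdSet_of_adj_of_adj
      (u := ⟨n - 3 * (n / 4) + 3 * i, by omega⟩) (v := ⟨n - 3 * (n / 4) + 3 * i + 1, by omega⟩)
      (w := ⟨n - 3 * (n / 4) + 3 * i + 2, by omega⟩) (hadj _ _ 0 two_pos rfl rfl)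
      (hadj _ _ 1 one_lt_two rfl rfl) (by simp) with h | h | h <;>
      exact ⟨_, h, by simp only; omega⟩
  rcases mem_closedNbhdSet_iff.1 hx with hxD | ⟨d, hd, hdx⟩
  · refine ⟨x, hxD, ?_⟩
    simp only [copyIndex]; split_ifs <;> omega
  · refine ⟨d, hd, ?_⟩
    rw [adj_iff hn] at hdx
    simp only [copyIndex]; split_ifs <;> omega

theorem isolationNumber_ekFamily_two (hn : 4 ≤ n) :
    (BpP3 n).isolationNumber (EkFamily 2) = n / 4 :=
  isolationNumber_eq_of_isIsolatingSet (isIsolatingSet_pathVertices hn) (ncard_pathVertices n)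
    fun _ => le_ncard_of_isIsolatingSet hn

end BpP3

theorem stmt_4 (n : ℕ) (hn : n ≤ 2 ∨ 5 ≤ n) :
    (BpP3 n).isolationNumber (EkFamily 2) = (4 * n - (BpP3 n).numLeaves) / 14 := by
  rcases hn with hn | hn
  · have hchoose : (Nat.card (Fin n)).choose 2 < 2 := by
      rw [Nat.card_fin]; interval_cases n <;> decide
    rw [isolationNumber_eq_of_isIsolatingSet
      (isIsolatingSet_ekFamily_of_card_choose_two_lt hchoose) (Set.ncard_empty _)
      fun _ _ => Nat.zero_le _]
    omega
  · rw [BpP3.isolationNumber_ekFamily_two (by omega), BpP3.numLeaves_eq hn]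
    omega
end

section
/- If G is a graph, 𝓕 is a set of graphs, X ⊆ V(G), and Y ⊆ N[X] (the closed neighbourhood of X in G), then ι(G, 𝓕) ≤ |X| + ι(G − Y, 𝓕), where G − Y is the graph obtained from G by deleting the vertices in Y. -/
open SimpleGraph

lemma mem_closedNbhdSet' {V : Type*} (G : SimpleGraph V) (D : Set V) (v : V) :
    v ∈ G.closedNbhdSet D ↔ v ∈ D ∨ ∃ u ∈ D, G.Adj u v := by
  simp [SimpleGraph.closedNbhdSet, SimpleGraph.mem_neighborSet]

theorem stmt_7 {V : Type*} [Fintype V] (G : SimpleGraph V)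
    (F : Set ((n : ℕ) × SimpleGraph (Fin n))) (X Y : Set V)
    (hY : Y ⊆ G.closedNbhdSet X) :
    G.isolationNumber F ≤ X.ncard + (G.induce Yᶜ).isolationNumber F  := by
  classical
  by_cases hne : Set.Nonempty {D : Set ↥Yᶜ | (G.induce Yᶜ).IsIsolatingSet F D}
  · have hmem := Nat.sInf_mem (hne.image Set.ncard)
    obtain ⟨D', hD'iso, hcard⟩ := hmem
    set D : Set V := X ∪ (Subtype.val '' D') with hD
    have hDiso : G.IsIsolatingSet F D := by
      intro H hH ⟨f, hf⟩
      apply hD'iso H hH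
      have key : ∀ v : ↥(G.closedNbhdSet D)ᶜ, (v : V) ∈ Yᶜ := by
        intro ⟨v, hv⟩
        intro hvY
        exact hv (by
          rcases (mem_closedNbhdSet' G X v).mp (hY hvY) with h | ⟨u, hu, hadj⟩
          · exact (mem_closedNbhdSet' G D v).mpr (Or.inl (Or.inl h))
          · exact (mem_closedNbhdSet' G D v).mpr (Or.inr ⟨u, Or.inl hu, hadj⟩))
      have key2 : ∀ v : ↥(G.closedNbhdSet D)ᶜ,
          (⟨(v : V), key v⟩ : ↥Yᶜ) ∈ ((G.induce Yᶜ).closedNbhdSet D')ᶜ := by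
        intro ⟨v, hv⟩ hc
        rcases (mem_closedNbhdSet' _ D' _).mp hc with h | ⟨u, hu, hadj⟩
        · exact hv ((mem_closedNbhdSet' G D v).mpr (Or.inl (Or.inr ⟨_, h, rfl⟩)))
        · exact hv ((mem_closedNbhdSet' G D v).mpr
            (Or.inr ⟨u.val, Or.inr ⟨u, hu, rfl⟩, hadj⟩))
      refine ⟨⟨fun i => ⟨⟨(f i : V), key (f i)⟩, key2 (f i)⟩, ?_⟩, ?_⟩
      · intro i j hij
        exact f.injective (Subtype.ext (congrArg (fun x => x.val.val) hij))
      · intro a b hab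
        exact hf a b hab
    calc G.isolationNumber F ≤ D.ncard := Nat.sInf_le ⟨D, hDiso, rfl⟩
      _ ≤ X.ncard + (Subtype.val '' D').ncard := Set.ncard_union_le _ _
      _ = X.ncard + (G.induce Yᶜ).isolationNumber F := by
          rw [Set.ncard_image_of_injective _ Subtype.val_injective, hcard]; rfl
  · -- no isolating set for the induced graph: some H in F has H.1 = 0
    have hempty : ¬ (G.induce Yᶜ).IsIsolatingSet F Set.univ := fun h => hne ⟨_, h⟩
    simp only [SimpleGraph.IsIsolatingSet, not_forall] at hempty
    obtain ⟨H, hH, hcopy⟩ := hempty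
    rw [not_not] at hcopy
    obtain ⟨f, -⟩ := hcopy
    have hS : ¬ Nonempty ↥(((G.induce Yᶜ).closedNbhdSet Set.univ)ᶜ) := by
      rintro ⟨⟨s, hs⟩⟩
      exact hs ((mem_closedNbhdSet' _ _ _).mpr (Or.inl trivial))
    have hn : H.1 = 0 := by
      by_contra h
      exact hS ⟨f ⟨0, Nat.pos_of_ne_zero h⟩⟩
    have : {D : Set V | G.IsIsolatingSet F D} = ∅ := by
      ext D
      simp only [Set.mem_setOf_eq, Set.mem_empty_iff_false, iff_false]
      intro hiso
      exact hiso H hH ⟨⟨fun i => (Fin.cast hn i).elim0, fun i => (Fin.cast hn i).elim0⟩,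
        fun a => (Fin.cast hn a).elim0⟩
    rw [SimpleGraph.isolationNumber, this, Set.image_empty, Nat.sInf_empty]
    exact Nat.zero_le _
end

section
/- For every n ≥ 4, the path P_n on n vertices satisfies ι_2(P_n) ≤ ⌊n/4⌋; in particular, the set {4i : 1 ≤ i ≤ n/4} is an 𝓔_2-isolating set of P_n (with vertex set {1,…,n} and edges {i, i+1}). -/
open SimpleGraph

/-- In a graph where every vertex has at most one neighbour, a walk starting at an endpoint of
an edge stays on that edge. -/
lemma walk_stay' {V : Type*} {H : SimpleGraph V}
    (hm : ∀ a b c : V, H.Adj a b → H.Adj b c → a = c) :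
    ∀ {a x : V} (_ : H.Walk a x) (b : V), H.Adj a b → x = a ∨ x = b := by
  intro a x w
  induction w with
  | nil => intro b _; exact Or.inl rfl
  | @cons a y x h p ih =>
    intro b hab
    have hby : b = y := hm b a y hab.symm h
    subst hby
    rcases ih a h.symm with h1 | h1
    · exact Or.inr h1
    · exact Or.inl h1

/-- A connected graph with at least two edges has a path of length two. -/
lemma cherry' {m : ℕ} {H : SimpleGraph (Fin m)} (hc : H.Connected)
    (he : 2 ≤ H.edgeSet.ncard) :
    ∃ a b c : Fin m, a ≠ c ∧ H.Adj a b ∧ H.Adj b c := by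
  by_contra hcon
  push_neg at hcon
  have hm : ∀ a b c : Fin m, H.Adj a b → H.Adj b c → a = c := by
    intro a b c h1 h2
    by_contra hne
    exact hcon a b c hne h1 h2
  obtain ⟨e1, e2, he1, he2, hne⟩ :=
    (Set.one_lt_ncard_iff (Set.toFinite H.edgeSet)).mp (lt_of_lt_of_le one_lt_two he)
  induction e1 using Sym2.ind with
  | _ a b =>
  induction e2 using Sym2.ind with
  | _ c d =>
  rw [SimpleGraph.mem_edgeSet] at he1 he2
  obtain ⟨w⟩ := hc.preconnected a c
  have hc' : c = a ∨ c = b := walk_stay' hm w b he1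
  obtain ⟨w'⟩ := hc.preconnected a d
  have hd' : d = a ∨ d = b := walk_stay' hm w' b he1
  apply hne
  rcases hc' with rfl | rfl <;> rcases hd' with rfl | rfl
  · exact absurd he2 (H.irrefl)
  · rfl
  · exact Sym2.eq_swap.symm
  · exact absurd he2 (H.irrefl)

/-- Vertices outside the closed neighbourhood of the isolating set avoid the covered residues. -/
lemma not_cov' (n : ℕ) (x : Fin n)
    (hx : (x : Fin n) ∉ (SimpleGraph.pathGraph n).closedNbhdSet
      {v : Fin n | ∃ i : ℕ, 1 ≤ i ∧ i ≤ n / 4 ∧ (v : ℕ) + 1 = 4 * i})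
    (i : ℕ) (h1 : 1 ≤ i) (h2 : i ≤ n / 4) :
    (x : ℕ) + 2 ≠ 4 * i ∧ (x : ℕ) + 1 ≠ 4 * i ∧ (x : ℕ) ≠ 4 * i := by
  have hin : 4 * i ≤ n := by omega
  rw [SimpleGraph.closedNbhdSet] at hx
  simp only [Set.mem_union, Set.mem_iUnion, Set.mem_setOf_eq, SimpleGraph.mem_neighborSet,
    not_or, not_exists] at hx
  obtain ⟨hx1, hx2⟩ := hx
  refine ⟨?_, ?_, ?_⟩
  · intro h
    exact hx2 ⟨(x : ℕ) + 1, by omega⟩ ⟨i, h1, h2, by simpa using by omega⟩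
      (by rw [SimpleGraph.pathGraph_adj]; right; simp)
  · intro h
    exact hx1 i ⟨h1, h2, h⟩
  · intro h
    exact hx2 ⟨(x : ℕ) - 1, by omega⟩ ⟨i, h1, h2, by simpa using by omega⟩
      (by rw [SimpleGraph.pathGraph_adj]; left; simpa using by omega)

/-- Numeric core: out of three consecutive vertex values, one is covered. -/
lemma num_core (n a : ℕ) (hn : 4 ≤ n) (ha : a + 2 < n) :
    ∃ i, 1 ≤ i ∧ i ≤ n / 4 ∧ a ≤ 4 * i ∧ 4 * i ≤ a + 4 := by
  rcases Nat.lt_or_ge a 1 with h | h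
  · exact ⟨1, le_refl 1, by omega, by omega, by omega⟩
  · have h4 : a % 4 = 0 ∨ a % 4 = 1 ∨ a % 4 = 2 ∨ a % 4 = 3 := by omega
    rcases h4 with h4 | h4 | h4 | h4
    · exact ⟨a / 4, by omega, by omega, by omega, by omega⟩
    · exact ⟨a / 4 + 1, by omega, by omega, by omega, by omega⟩
    · exact ⟨a / 4 + 1, by omega, by omega, by omega, by omega⟩
    · exact ⟨a / 4 + 1, by omega, by omega, by omega, by omega⟩

theorem stmt_11 (n : ℕ) (hn : 4 ≤ n) :
    (SimpleGraph.pathGraph n).IsIsolatingSet (EkFamily 2)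
      {v : Fin n | ∃ i : ℕ, 1 ≤ i ∧ i ≤ n / 4 ∧ (v : ℕ) + 1 = 4 * i} ∧
    (SimpleGraph.pathGraph n).isolationNumber (EkFamily 2) ≤ n / 4 := by
  set D : Set (Fin n) := {v : Fin n | ∃ i : ℕ, 1 ≤ i ∧ i ≤ n / 4 ∧ (v : ℕ) + 1 = 4 * i} with hD
  have hIso : (SimpleGraph.pathGraph n).IsIsolatingSet (EkFamily 2) D := by
    rintro ⟨m, H⟩ ⟨hconn, hcard⟩ ⟨f, hf⟩
    obtain ⟨x, y, z, hxz, hxy, hyz⟩ := cherry' hconn hcard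
    have huv := hf x y hxy
    have hvw := hf y z hyz
    have hfxz : f x ≠ f z := fun h => hxz (f.injective h)
    set u := f x with hu
    set v := f y with hv
    set w := f z with hw
    have huv' : (SimpleGraph.pathGraph n).Adj u.val v.val := huv
    have hvw' : (SimpleGraph.pathGraph n).Adj v.val w.val := hvw
    rw [SimpleGraph.pathGraph_adj] at huv' hvw'
    have hune : (u.val : ℕ) ≠ (w.val : ℕ) := by
      intro h
      exact hfxz (Subtype.ext (Fin.ext h))
    -- get the three consecutive values
    have hu2 := u.2
    have hv2 := v.2
    have hw2 := w.2
    simp only [Set.mem_compl_iff] at hu2 hv2 hw2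
    -- a = smallest value
    obtain ⟨a, ha2, hua, hva, hwa⟩ :
        ∃ a : ℕ, a + 2 < n ∧
          ((u.val : ℕ) = a ∨ (u.val : ℕ) = a + 2) ∧ (v.val : ℕ) = a + 1 ∧
          ((w.val : ℕ) = a ∨ (w.val : ℕ) = a + 2) := by
      rcases huv' with h1 | h1 <;> rcases hvw' with h2 | h2
      · exact ⟨(u.val : ℕ), by have := w.val.isLt; omega, Or.inl rfl, by omega, Or.inr (by omega)⟩
      · omega
      · omega
      · exact ⟨(w.val : ℕ), by have := u.val.isLt; omega, Or.inr (by omega), by omega, Or.inl rfl⟩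
    obtain ⟨i, hi1, hi2, hi3, hi4⟩ := num_core n a hn ha2
    have Hu := not_cov' n u.val hu2 i hi1 hi2
    have Hv := not_cov' n v.val hv2 i hi1 hi2
    have Hw := not_cov' n w.val hw2 i hi1 hi2
    rcases hua with h | h <;> rcases hwa with h' | h' <;> omega
  refine ⟨hIso, ?_⟩
  have hcard : D.ncard ≤ n / 4 := by
    have himg : D = (fun i : ℕ => (⟨(4 * i - 1) % n, Nat.mod_lt _ (by omega)⟩ : Fin n)) ''
        Set.Icc 1 (n / 4) := by
      ext v
      simp only [Set.mem_image, Set.mem_Icc, hD, Set.mem_setOf_eq]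
      constructor
      · rintro ⟨i, h1, h2, h3⟩
        refine ⟨i, ⟨h1, h2⟩, ?_⟩
        have hlt : 4 * i - 1 < n := by omega
        apply Fin.ext
        simp [Nat.mod_eq_of_lt hlt]
        omega
      · rintro ⟨i, ⟨h1, h2⟩, rfl⟩
        have hlt : 4 * i - 1 < n := by omega
        exact ⟨i, h1, h2, by simp [Nat.mod_eq_of_lt hlt]; omega⟩
    calc D.ncard ≤ (Set.Icc 1 (n / 4)).ncard := by
          rw [himg]; exact Set.ncard_image_le (Set.finite_Icc _ _)
      _ = n / 4 := by rw [← Finset.coe_Icc, Set.ncard_coe_finset, Nat.card_Icc]; omega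
  exact le_trans (Nat.sInf_le ⟨D, hIso, rfl⟩) hcard
end

section
/- For every n ≥ 5, the set {5i : 1 ≤ i ≤ n/5} is an 𝓔_3-isolating set of the path P_n (with vertex set {1,…,n} and edges {i, i+1}); consequently ι_3(P_n) ≤ ⌊n/5⌋. -/
open SimpleGraph

/-- Among any four consecutive values there is one "covered" value. -/
private lemma arith_aux (n a : ℕ) (hn : 5 ≤ n) (ha : a + 4 ≤ n) :
    ∃ k i, a ≤ k ∧ k ≤ a + 3 ∧ 1 ≤ i ∧ 5 * i ≤ n ∧
      (k + 1 = 5 * i ∨ k + 2 = 5 * i ∨ k = 5 * i) := by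
  have h5 : a % 5 < 5 := Nat.mod_lt a (by norm_num)
  interval_cases h : a % 5
  · rcases Nat.eq_zero_or_pos a with rfl | hpos
    · exact ⟨3, 1, by omega, by omega, le_rfl, by omega, by omega⟩
    · exact ⟨a, a / 5, le_rfl, by omega, by omega, by omega, by omega⟩
  · exact ⟨a + 3, (a + 4) / 5, by omega, by omega, by omega, by omega, by omega⟩
  · exact ⟨a + 2, (a + 4) / 5, by omega, by omega, by omega, by omega, by omega⟩
  · exact ⟨a + 1, (a + 2) / 5, by omega, by omega, by omega, by omega, by omega⟩
  · exact ⟨a, (a + 1) / 5, by omega, by omega, by omega, by omega, by omega⟩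

/-- A covered value lies in the closed neighbourhood of the dominating set. -/
private lemma mem_closed_aux {n : ℕ} {v : Fin n} {i : ℕ} (h1 : 1 ≤ i) (h2 : 5 * i ≤ n)
    (h : (v : ℕ) + 1 = 5 * i ∨ (v : ℕ) + 2 = 5 * i ∨ (v : ℕ) = 5 * i) :
    v ∈ (SimpleGraph.pathGraph n).closedNbhdSet
      {v : Fin n | ∃ i : ℕ, 1 ≤ i ∧ i ≤ n / 5 ∧ (v : ℕ) + 1 = 5 * i} := by
  rcases h with h | h | h
  · exact Or.inl ⟨i, h1, by omega, h⟩
  · refine Or.inr (Set.mem_biUnion (x := (⟨5 * i - 1, by omega⟩ : Fin n)) ⟨i, h1, by omega, by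
      simp; omega⟩ ?_)
    rw [SimpleGraph.mem_neighborSet, SimpleGraph.pathGraph_adj]
    right; simp; omega
  · refine Or.inr (Set.mem_biUnion (x := (⟨5 * i - 1, by omega⟩ : Fin n)) ⟨i, h1, by omega, by
      simp; omega⟩ ?_)
    rw [SimpleGraph.mem_neighborSet, SimpleGraph.pathGraph_adj]
    left; simp; omega

/-- Intermediate value theorem for walks in induced subgraphs of path graphs. -/
private lemma walk_ivt {n : ℕ} {C : Set (Fin n)} {u w : C}
    (p : ((SimpleGraph.pathGraph n).induce C).Walk u w) :
    ∀ k : ℕ, ((u : Fin n) : ℕ) ≤ k → k ≤ ((w : Fin n) : ℕ) →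
    ∃ x : C, ((x : Fin n) : ℕ) = k := by
  induction p with
  | nil => exact fun k h1 h2 => ⟨_, le_antisymm h1 h2⟩
  | @cons a b c hadj q ih =>
    intro k h1 h2
    rcases eq_or_lt_of_le h1 with heq | hlt
    · exact ⟨a, heq⟩
    · have hab : ((a : Fin n) : ℕ) + 1 = ((b : Fin n) : ℕ) ∨
          ((b : Fin n) : ℕ) + 1 = ((a : Fin n) : ℕ) := SimpleGraph.pathGraph_adj.mp hadj
      exact ih k (by omega) h2

theorem stmt_16 (n : ℕ) (hn : 5 ≤ n) :
    (SimpleGraph.pathGraph n).IsIsolatingSet (EkFamily 3)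
      {v : Fin n | ∃ i : ℕ, 1 ≤ i ∧ i ≤ n / 5 ∧ (v : ℕ) + 1 = 5 * i} ∧
    (SimpleGraph.pathGraph n).isolationNumber (EkFamily 3) ≤ n / 5 := by
  set D : Set (Fin n) := {v : Fin n | ∃ i : ℕ, 1 ≤ i ∧ i ≤ n / 5 ∧ (v : ℕ) + 1 = 5 * i} with hD
  have hiso : (SimpleGraph.pathGraph n).IsIsolatingSet (EkFamily 3) D := by
    rintro ⟨m, H⟩ ⟨hconn, hedge⟩ ⟨f, hf⟩
    have hedge2 : 2 < H.edgeSet.ncard := hedge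
    -- the homomorphism
    let φ : H →g (SimpleGraph.pathGraph n).induce ((SimpleGraph.pathGraph n).closedNbhdSet D)ᶜ :=
      ⟨f, fun {a b} h => hf a b h⟩
    -- the key impossibility
    have final : ∀ (a b : Fin m) (k : ℕ), ((f a : Fin n) : ℕ) = k →
        k + 3 ≤ ((f b : Fin n) : ℕ) → False := by
      intro a b k hka hkb
      obtain ⟨p0⟩ := hconn.preconnected a b
      have pw : ((SimpleGraph.pathGraph n).induce
          ((SimpleGraph.pathGraph n).closedNbhdSet D)ᶜ).Walk (f a) (f b) := p0.map φ
      have pwivt := walk_ivt pw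
      have ivt : ∀ j : ℕ, k + j ≤ ((f b : Fin n) : ℕ) →
          ∃ x : (((SimpleGraph.pathGraph n).closedNbhdSet D)ᶜ : Set (Fin n)), ((x : Fin n) : ℕ) = k + j :=
        fun j hj => pwivt (k + j) (by omega) hj
      obtain ⟨x3, hx3⟩ := ivt 3 (by omega)
      have hlt : k + 4 ≤ n := by have := (x3 : Fin n).isLt; omega
      obtain ⟨k', i, hk'1, hk'2, hi1, hi2, hcond⟩ := arith_aux n k hn hlt
      obtain ⟨x, hx⟩ := ivt (k' - k) (by omega)
      have hxval : ((x : Fin n) : ℕ) = k' := by omega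
      exact x.2 (mem_closed_aux hi1 hi2 (by rw [hxval]; exact hcond))
    -- extract three distinct edges
    have hfin : H.edgeSet.Finite := Set.toFinite _
    obtain ⟨e1, e2, e3, he1, he2, he3, h12, h13, h23⟩ :=
      (Set.two_lt_ncard_iff hfin).mp hedge2
    -- for each edge get an ordered pair of endpoints
    have getk : ∀ e ∈ H.edgeSet, ∃ (a b : Fin m), e = s(a, b) ∧
        ((f a : Fin n) : ℕ) + 1 = ((f b : Fin n) : ℕ) := by
      intro e he
      induction e with
      | h a b =>
        have hadj : H.Adj a b := he
        have h' := SimpleGraph.pathGraph_adj.mp (hf a b hadj)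
        rcases h' with h' | h'
        · refine ⟨a, b, rfl, ?_⟩; exact h'
        · refine ⟨b, a, Sym2.eq_swap, ?_⟩; exact h'
    obtain ⟨a1, b1, hE1, hk1⟩ := getk e1 he1
    obtain ⟨a2, b2, hE2, hk2⟩ := getk e2 he2
    obtain ⟨a3, b3, hE3, hk3⟩ := getk e3 he3
    -- the lower endpoints are pairwise distinct
    have inj : ∀ (a b a' b' : Fin m),
        ((f a : Fin n) : ℕ) + 1 = ((f b : Fin n) : ℕ) →
        ((f a' : Fin n) : ℕ) + 1 = ((f b' : Fin n) : ℕ) →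
        ((f a : Fin n) : ℕ) = ((f a' : Fin n) : ℕ) → s(a, b) = s(a', b') := by
      intro a b a' b' h h' hh
      have ha : a = a' := f.injective (Subtype.ext (Fin.ext hh))
      have hb : b = b' := f.injective (Subtype.ext (Fin.ext (by omega)))
      rw [ha, hb]
    set k1 := ((f a1 : Fin n) : ℕ)
    set k2 := ((f a2 : Fin n) : ℕ)
    set k3 := ((f a3 : Fin n) : ℕ)
    have d12 : k1 ≠ k2 := fun h => h12 (by rw [hE1, hE2]; exact inj _ _ _ _ hk1 hk2 h)
    have d13 : k1 ≠ k3 := fun h => h13 (by rw [hE1, hE3]; exact inj _ _ _ _ hk1 hk3 h)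
    have d23 : k2 ≠ k3 := fun h => h23 (by rw [hE2, hE3]; exact inj _ _ _ _ hk2 hk3 h)
    have : (k1 + 2 ≤ k2 ∨ k1 + 2 ≤ k3) ∨ (k2 + 2 ≤ k1 ∨ k2 + 2 ≤ k3) ∨
        (k3 + 2 ≤ k1 ∨ k3 + 2 ≤ k2) := by omega
    rcases this with (h | h) | (h | h) | (h | h)
    · exact final a1 b2 k1 rfl (by omega)
    · exact final a1 b3 k1 rfl (by omega)
    · exact final a2 b1 k2 rfl (by omega)
    · exact final a2 b3 k2 rfl (by omega)
    · exact final a3 b1 k3 rfl (by omega)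
    · exact final a3 b2 k3 rfl (by omega)
  refine ⟨hiso, ?_⟩
  -- cardinality bound
  have hcard : D.ncard ≤ n / 5 := by
    have hsub : D ⊆ ⋃ i ∈ Set.Icc 1 (n / 5), {v : Fin n | (v : ℕ) + 1 = 5 * i} := by
      rintro v ⟨i, h1, h2, h3⟩
      exact Set.mem_biUnion ⟨h1, h2⟩ h3
    calc D.ncard ≤ (Set.Icc 1 (n / 5)).ncard := by
          refine Set.ncard_le_ncard_of_injOn (fun v : Fin n => ((v : ℕ) + 1) / 5) ?_ ?_
            (Set.finite_Icc _ _)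
          · rintro v ⟨i, h1, h2, h3⟩
            simp only [Set.mem_Icc]
            omega
          · rintro v ⟨i, h1, h2, h3⟩ w ⟨j, h1', h2', h3'⟩ hvw
            have : (v : ℕ) = (w : ℕ) := by simp only at hvw; omega
            exact Fin.ext this
      _ = n / 5 := by
          rw [← Finset.coe_Icc, Set.ncard_coe_finset, Nat.card_Icc]; omega
  calc (SimpleGraph.pathGraph n).isolationNumber (EkFamily 3) ≤ D.ncard :=
        Nat.sInf_le ⟨D, hiso, rfl⟩
    _ ≤ n / 5 := hcard
end

section
/- For every n ≥ 3, the set {6i − 5 : 1 ≤ i ≤ ⌊(n+5)/6⌋} is an 𝓔_3-isolating set of the cycle C_n (with vertex set {1,…,n}, cyclically adjacent); consequently ι_3(C_n) ≤ ⌊(n+5)/6⌋. -/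
open SimpleGraph

lemma adj_succ_aux {n : ℕ} (u v : Fin n) (h : (u : ℕ) = (v : ℕ) + 1) :
    (SimpleGraph.cycleGraph n).Adj u v := by
  rw [cycleGraph_adj']
  left
  rw [Fin.sub_def]
  have hu := u.isLt
  have hv := v.isLt
  simp only
  have h1 : n - (v : ℕ) + (u : ℕ) = n + 1 := by omega
  rw [h1, Nat.add_mod_left, Nat.mod_eq_of_lt (by omega)]

lemma adj_wrap_aux {n : ℕ} (hn : 3 ≤ n) (u v : Fin n) (h0 : (u : ℕ) = 0)
    (h1 : (v : ℕ) = n - 1) : (SimpleGraph.cycleGraph n).Adj u v := by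
  rw [cycleGraph_adj']
  left
  rw [Fin.sub_def]
  have hv := v.isLt
  simp only
  have h2 : n - (v : ℕ) + (u : ℕ) = 1 := by omega
  rw [h2, Nat.mod_eq_of_lt (by omega)]

lemma adj_step_aux {n : ℕ} (u v : Fin n)
    (hu : 2 ≤ (u : ℕ) % 6 ∧ (u : ℕ) % 6 ≤ 4) (hv : 2 ≤ (v : ℕ) % 6 ∧ (v : ℕ) % 6 ≤ 4)
    (h : (SimpleGraph.cycleGraph n).Adj u v) :
    (u : ℕ) = (v : ℕ) + 1 ∨ (v : ℕ) = (u : ℕ) + 1 := by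
  rw [cycleGraph_adj'] at h
  have hul := u.isLt
  have hvl := v.isLt
  rcases h with h | h <;> rw [Fin.sub_def] at h <;> simp only at h
  · have h2 : (n - (v : ℕ) + (u : ℕ)) % n = 1 := h
    rcases Nat.lt_or_ge (n - (v : ℕ) + (u : ℕ)) n with hc | hc
    · rw [Nat.mod_eq_of_lt hc] at h2; omega
    · rw [Nat.mod_eq_sub_mod hc, Nat.mod_eq_of_lt (by omega)] at h2; omega
  · have h2 : (n - (u : ℕ) + (v : ℕ)) % n = 1 := h
    rcases Nat.lt_or_ge (n - (u : ℕ) + (v : ℕ)) n with hc | hc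
    · rw [Nat.mod_eq_of_lt hc] at h2; omega
    · rw [Nat.mod_eq_sub_mod hc, Nat.mod_eq_of_lt (by omega)] at h2; omega

theorem stmt_17 (n : ℕ) (hn : 3 ≤ n) :
    (SimpleGraph.cycleGraph n).IsIsolatingSet (EkFamily 3)
      {v : Fin n | ∃ i : ℕ, 1 ≤ i ∧ i ≤ (n + 5) / 6 ∧ (v : ℕ) + 1 = 6 * i - 5} ∧
    (SimpleGraph.cycleGraph n).isolationNumber (EkFamily 3) ≤ (n + 5) / 6 := by
  set D : Set (Fin n) :=
    {v : Fin n | ∃ i : ℕ, 1 ≤ i ∧ i ≤ (n + 5) / 6 ∧ (v : ℕ) + 1 = 6 * i - 5} with hDdef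
  -- membership in D from residue 0
  have hDmem : ∀ v : Fin n, (v : ℕ) % 6 = 0 → v ∈ D := by
    intro v hv
    have hvl := v.isLt
    exact ⟨(v : ℕ) / 6 + 1, by omega, by omega, by omega⟩
  -- every survivor has residue in [2,4]
  have hres : ∀ v : Fin n, v ∈ ((SimpleGraph.cycleGraph n).closedNbhdSet D)ᶜ →
      2 ≤ (v : ℕ) % 6 ∧ (v : ℕ) % 6 ≤ 4 := by
    intro v hv
    by_contra hc
    apply hv
    have hvl := v.isLt
    rcases (by omega : (v : ℕ) % 6 = 0 ∨ (v : ℕ) % 6 = 1 ∨ (v : ℕ) % 6 = 5) with h0 | h1 | h5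
    · exact Set.mem_union_left _ (hDmem v h0)
    · refine Set.mem_union_right _ ?_
      have hvpos : 1 ≤ (v : ℕ) := by omega
      refine Set.mem_biUnion (hDmem ⟨(v : ℕ) - 1, by omega⟩ (by simp; omega)) ?_
      exact (adj_succ_aux v ⟨(v : ℕ) - 1, by omega⟩ (by simp; omega)).symm
    · refine Set.mem_union_right _ ?_
      rcases Nat.lt_or_ge ((v : ℕ) + 1) n with hlt | hge
      · refine Set.mem_biUnion (hDmem ⟨(v : ℕ) + 1, hlt⟩ (by simp; omega)) ?_
        exact adj_succ_aux ⟨(v : ℕ) + 1, hlt⟩ v (by simp)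
      · refine Set.mem_biUnion (hDmem ⟨0, by omega⟩ (by simp)) ?_
        exact adj_wrap_aux hn ⟨0, by omega⟩ v (by simp) (by omega)
  have part1 : (SimpleGraph.cycleGraph n).IsIsolatingSet (EkFamily 3) D := by
    rintro ⟨m, G'⟩ ⟨hconn, hedges⟩ ⟨f, hf⟩
    have hedges' : 3 ≤ G'.edgeSet.ncard := hedges
    have hresf : ∀ a : Fin m,
        2 ≤ ((f a : Fin n) : ℕ) % 6 ∧ ((f a : Fin n) : ℕ) % 6 ≤ 4 :=
      fun a => hres _ (f a).2
    have hadj : ∀ a b : Fin m, G'.Adj a b →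
        (SimpleGraph.cycleGraph n).Adj (f a : Fin n) (f b : Fin n) := by
      intro a b h
      exact hf a b h
    have hstep : ∀ a b : Fin m, G'.Adj a b →
        ((f a : Fin n) : ℕ) = ((f b : Fin n) : ℕ) + 1 ∨
        ((f b : Fin n) : ℕ) = ((f a : Fin n) : ℕ) + 1 :=
      fun a b h => adj_step_aux _ _ (hresf a) (hresf b) (hadj a b h)
    have hblk : ∀ a b : Fin m, G'.Adj a b →
        ((f a : Fin n) : ℕ) / 6 = ((f b : Fin n) : ℕ) / 6 := by
      intro a b h
      have h1 := hresf a
      have h2 := hresf b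
      rcases hstep a b h with h3 | h3 <;> omega
    have hblkR : ∀ a b : Fin m, G'.Reachable a b →
        ((f a : Fin n) : ℕ) / 6 = ((f b : Fin n) : ℕ) / 6 := by
      intro a b hr
      obtain ⟨w⟩ := hr
      induction w with
      | nil => rfl
      | cons h p ih => exact (hblk _ _ h).trans ih
    have hg3 : ∀ a : Fin m, ((f a : Fin n) : ℕ) % 6 - 2 < 3 := by
      intro a; have := hresf a; omega
    set g : Fin m → Fin 3 := fun a => ⟨((f a : Fin n) : ℕ) % 6 - 2, hg3 a⟩ with hgdef
    have hginj : Function.Injective g := by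
      intro a b h
      have hval : ((f a : Fin n) : ℕ) % 6 = ((f b : Fin n) : ℕ) % 6 := by
        have h1 := hresf a
        have h2 := hresf b
        have := congrArg Fin.val h
        simp [hgdef] at this
        omega
      have hb := hblkR a b (hconn.preconnected a b)
      apply f.injective
      apply Subtype.ext
      apply Fin.ext
      omega
    -- edges map into the two possible pairs
    have himg : Sym2.map g '' G'.edgeSet ⊆
        ({s((0 : Fin 3), (1 : Fin 3)), s((1 : Fin 3), (2 : Fin 3))} : Set (Sym2 (Fin 3))) := by
      rintro x ⟨e, he, rfl⟩
      induction e with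
      | _ a b =>
        have hab : G'.Adj a b := G'.mem_edgeSet.mp he
        have h1 := hresf a
        have h2 := hresf b
        have hs := hstep a b hab
        have hvals : ((g a : ℕ) = 0 ∧ (g b : ℕ) = 1) ∨ ((g a : ℕ) = 1 ∧ (g b : ℕ) = 0) ∨
            ((g a : ℕ) = 1 ∧ (g b : ℕ) = 2) ∨ ((g a : ℕ) = 2 ∧ (g b : ℕ) = 1) := by
          simp only [hgdef]
          omega
        rw [Sym2.map_pair_eq]
        rcases hvals with ⟨ha, hb⟩ | ⟨ha, hb⟩ | ⟨ha, hb⟩ | ⟨ha, hb⟩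
        · rw [show g a = (0 : Fin 3) from Fin.ext ha, show g b = (1 : Fin 3) from Fin.ext hb]
          exact Set.mem_insert _ _
        · rw [show g a = (1 : Fin 3) from Fin.ext ha, show g b = (0 : Fin 3) from Fin.ext hb,
            Sym2.eq_swap]
          exact Set.mem_insert _ _
        · rw [show g a = (1 : Fin 3) from Fin.ext ha, show g b = (2 : Fin 3) from Fin.ext hb]
          exact Set.mem_insert_of_mem _ rfl
        · rw [show g a = (2 : Fin 3) from Fin.ext ha, show g b = (1 : Fin 3) from Fin.ext hb]
          exact Set.mem_insert_of_mem _ Sym2.eq_swap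
    have hcard1 : (Sym2.map g '' G'.edgeSet).ncard = G'.edgeSet.ncard :=
      Set.ncard_image_of_injective _ (Sym2.map.injective hginj)
    have hcard2 : (Sym2.map g '' G'.edgeSet).ncard ≤ 2 := by
      refine le_trans (Set.ncard_le_ncard himg (Set.toFinite _)) ?_
      refine le_trans (Set.ncard_insert_le _ _) ?_
      simp
    omega
  refine ⟨part1, ?_⟩
  have hsInf : (SimpleGraph.cycleGraph n).isolationNumber (EkFamily 3) ≤ D.ncard :=
    Nat.sInf_le ⟨D, part1, rfl⟩
  have hcard : D.ncard ≤ (n + 5) / 6 := by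
    have hmem : ∀ v ∈ D, (v : ℕ) / 6 + 1 ∈ (↑(Finset.Icc 1 ((n + 5) / 6)) : Set ℕ) := by
      rintro v ⟨i, h1, h2, h3⟩
      simp only [Finset.coe_Icc, Set.mem_Icc]
      omega
    have hinj : Set.InjOn (fun v : Fin n => (v : ℕ) / 6 + 1) D := by
      rintro v ⟨i, h1, h2, h3⟩ w ⟨j, h4, h5, h6⟩ h
      simp only at h
      apply Fin.ext
      omega
    have := Set.ncard_le_ncard_of_injOn _ hmem hinj (Finset.finite_toSet _)
    rwa [Set.ncard_coe_finset, Nat.card_Icc, Nat.add_sub_cancel] at this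
  exact le_trans hsInf hcard
end

section
/- For every r ≥ 1, the graph B'_{7r,C_6} satisfies ι_2(B'_{7r,C_6}) = 2r, i.e. ι_2(B'_{7r,C_6}) = 2|V(B'_{7r,C_6})|/7. -/
open SimpleGraph

/-- Adjacency (one direction) for the graph `B'_{7r,C_6}` on vertex labels `0, …, 7r−1`:
for each `i < r`, the vertices `7i+1, …, 7i+6` form a 6-cycle, `7i` is a pendant vertex
joined to `7i+1` (so `7i, …, 7i+6` induce a copy of `C_6'` with leaf `7i`), and the leaves
`0, 7, 14, …, 7(r−1)` form a path. -/
def B7rC6Adj (r x y : ℕ) : Prop :=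
  (∃ i : ℕ, i + 1 < r ∧ x = 7 * i ∧ y = 7 * (i + 1)) ∨
  (∃ i < r, (x = 7 * i ∧ y = 7 * i + 1) ∨
            (∃ t < 5, x = 7 * i + 1 + t ∧ y = 7 * i + 2 + t) ∨
            (x = 7 * i + 1 ∧ y = 7 * i + 6))

/-- The graph `B'_{7r,C_6}`. -/
def B7rC6 (r : ℕ) : SimpleGraph (Fin (7 * r)) :=
  SimpleGraph.fromRel (fun x y => B7rC6Adj r x.1 y.1)
lemma adj_block {r x y : ℕ} (h : B7rC6Adj r x y) :
    x / 7 = y / 7 ∨ (x % 7 = 0 ∧ y % 7 = 0) := by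
  rcases h with ⟨i, _, rfl, rfl⟩ | ⟨i, _, (⟨rfl, rfl⟩ | ⟨t, ht, rfl, rfl⟩ | ⟨rfl, rfl⟩)⟩ <;> omega

lemma notDominated (r i k t : ℕ) (hk : k ≤ 6) (ht : t ≤ 2)
    (d v : ℕ) (hd : d = 7*i+k) (hv : v = 7*i+1+((k+1)%6+t)%6) :
    ¬ (B7rC6Adj r d v ∨ B7rC6Adj r v d) := by
  rintro (h|h) <;>
  rcases h with ⟨j, _, h1, h2⟩ | ⟨j, _, (⟨h1, h2⟩ | ⟨t', ht', h1, h2⟩ | ⟨h1, h2⟩)⟩ <;> omega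

lemma cycleAdj (r i a b : ℕ) (hi : i < r) (ha : a < 6) (hb : b = (a+1) % 6)
    (x y : Fin (7*r)) (hx : x.1 = 7*i+1+a) (hy : y.1 = 7*i+1+b) :
    (B7rC6 r).Adj x y := by
  rw [B7rC6, SimpleGraph.fromRel_adj]
  refine ⟨fun hxy => by rw [hxy] at hx; omega, ?_⟩
  by_cases h5 : a < 5
  · exact Or.inl (Or.inr ⟨i, hi, Or.inr (Or.inl ⟨a, h5, by omega, by omega⟩)⟩)
  · exact Or.inr (Or.inr ⟨i, hi, Or.inr (Or.inr ⟨by omega, by omega⟩)⟩)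

lemma p3_mem : (⟨3, SimpleGraph.pathGraph 3⟩ : (n : ℕ) × SimpleGraph (Fin n)) ∈ EkFamily 2 := by
  refine ⟨SimpleGraph.pathGraph_connected 2, ?_⟩
  have h : (SimpleGraph.pathGraph 3).edgeSet = {s(0,1), s(1,2)} := by
    ext e
    induction e using Sym2.ind with
    | _ a b =>
      simp only [SimpleGraph.mem_edgeSet, SimpleGraph.pathGraph_adj, Set.mem_insert_iff,
        Set.mem_singleton_iff, Sym2.eq_iff]
      fin_cases a <;> fin_cases b <;> simp
  rw [h, Set.ncard_pair (by decide)]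

lemma blockTwo (r : ℕ) (D : Set (Fin (7*r)))
    (hD : (B7rC6 r).IsIsolatingSet (EkFamily 2) D)
    (i k : ℕ) (hi : i < r) (hk : k ≤ 6)
    (hblock : ∀ d ∈ D, (d : Fin (7*r)).1 / 7 = i → d.1 = 7*i+k) : False := by
  set v : ℕ → Fin (7*r) := fun t => ⟨7*i+1+((k+1)%6+t)%6, by omega⟩ with hv
  have hval : ∀ t, (v t).1 = 7*i+1+((k+1)%6+t)%6 := fun t => rfl
  have hnot : ∀ t ≤ 2, (v t) ∉ (B7rC6 r).closedNbhdSet D := by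
    intro t ht hmem
    rcases hmem with hmem | hmem
    · have := hblock _ hmem (by rw [hval]; omega)
      rw [hval] at this; omega
    · simp only [Set.mem_iUnion, SimpleGraph.mem_neighborSet] at hmem
      obtain ⟨d, hdD, hadj⟩ := hmem
      rw [B7rC6, SimpleGraph.fromRel_adj] at hadj
      obtain ⟨hne, hrel⟩ := hadj
      have hdblock : d.1 / 7 = i := by
        have hvv := hval t
        rcases hrel with h | h <;> rcases adj_block h with h' | h' <;> omega
      have hdk := hblock d hdD hdblock
      exact notDominated r i k t hk ht d.1 (v t).1 hdk (hval t) hrel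
  have hadj : ∀ t ≤ 1, (B7rC6 r).Adj (v t) (v (t+1)) := by
    intro t ht
    exact cycleAdj r i (((k+1)%6+t)%6) (((k+1)%6+(t+1))%6) hi (by omega) (by omega)
      _ _ (hval t) (hval (t+1))
  apply hD ⟨3, SimpleGraph.pathGraph 3⟩ p3_mem
  refine ⟨⟨fun t => ⟨v t.1, hnot t.1 (Nat.lt_succ_iff.mp t.isLt)⟩, ?_⟩, ?_⟩
  · intro a b hab
    have heq : (v a.1).1 = (v b.1).1 := by
      have := congrArg (fun x => (x : { x // x ∈ ((B7rC6 r).closedNbhdSet D)ᶜ }).1.1) hab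
      exact this
    rw [hval, hval] at heq
    have ha : (a:ℕ) < 3 := a.isLt; have hb : (b:ℕ) < 3 := b.isLt
    exact Fin.ext (by omega)
  · intro a b hab
    rw [SimpleGraph.pathGraph_adj] at hab
    have ha : (a:ℕ) < 3 := a.isLt; have hb : (b:ℕ) < 3 := b.isLt
    rcases hab with h | h
    · have := hadj a.1 (by omega)
      rw [h] at this; exact this
    · have := hadj b.1 (by omega)
      rw [h] at this; exact this.symm

lemma lowerBound (r : ℕ) (D : Set (Fin (7*r)))
    (hD : (B7rC6 r).IsIsolatingSet (EkFamily 2) D) : 2*r ≤ D.ncard := by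
  classical
  rw [Set.ncard_eq_toFinset_card']
  have hsum := Finset.card_eq_sum_card_fiberwise
    (f := fun v : Fin (7*r) => v.1/7) (s := D.toFinset) (t := Finset.range r)
    (fun x _ => Finset.mem_range.mpr (show x.1/7 < r by have := x.isLt; omega))
  rw [hsum]
  have hfib : ∀ i ∈ Finset.range r,
      2 ≤ (D.toFinset.filter (fun v => v.1/7 = i)).card := by
    intro i hi
    rw [Finset.mem_range] at hi
    by_contra hlt
    push_neg at hlt
    have hone : ∀ a ∈ D.toFinset.filter (fun v => v.1/7 = i),
        ∀ b ∈ D.toFinset.filter (fun v => v.1/7 = i), a = b :=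
      Finset.card_le_one.mp (by omega)
    by_cases hne : (D.toFinset.filter (fun v => v.1/7 = i)).Nonempty
    · obtain ⟨d, hd⟩ := hne
      have hdD : d ∈ D := Set.mem_toFinset.mp (Finset.mem_filter.mp hd).1
      have hdi : d.1/7 = i := (Finset.mem_filter.mp hd).2
      refine blockTwo r D hD i (d.1 % 7) hi (by omega) ?_
      intro e heD hei
      have he : e ∈ D.toFinset.filter (fun v => v.1/7 = i) :=
        Finset.mem_filter.mpr ⟨Set.mem_toFinset.mpr heD, hei⟩
      rw [hone e he d hd]
      omega
    · refine blockTwo r D hD i 0 hi (by omega) ?_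
      intro e heD hei
      exact absurd (Finset.mem_filter.mpr ⟨Set.mem_toFinset.mpr heD, hei⟩)
        (fun h => hne ⟨e, h⟩)
  calc 2*r = ∑ _i ∈ Finset.range r, 2 := by simp [mul_comm]
    _ ≤ _ := Finset.sum_le_sum hfib

def gfun (r : ℕ) (hr : 1 ≤ r) : Fin r × Fin 2 → Fin (7*r) :=
  fun p => ⟨7*p.1.1+1+3*p.2.1, by have := p.1.isLt; have := p.2.isLt; omega⟩

lemma upperBound (r : ℕ) (hr : 1 ≤ r) :
    ∃ D : Set (Fin (7*r)), (B7rC6 r).IsIsolatingSet (EkFamily 2) D ∧ D.ncard = 2*r := by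
  refine ⟨{v | v.1 % 7 = 1 ∨ v.1 % 7 = 4}, ?_, ?_⟩
  · -- isolating: closed nbhd is everything
    have hcov : (B7rC6 r).closedNbhdSet {v : Fin (7*r) | v.1 % 7 = 1 ∨ v.1 % 7 = 4} = Set.univ := by
      ext w
      simp only [Set.mem_univ, iff_true, SimpleGraph.closedNbhdSet, Set.mem_union,
        Set.mem_iUnion, SimpleGraph.mem_neighborSet, Set.mem_setOf_eq]
      by_cases hw : w.1 % 7 = 1 ∨ w.1 % 7 = 4
      · exact Or.inl hw
      · right
        push_neg at hw
        have hwlt := w.isLt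
        set i := w.1 / 7 with hi
        have hir : i < r := by omega
        have hc : w.1 % 7 = 0 ∨ w.1 % 7 = 2 ∨ w.1 % 7 = 3 ∨ w.1 % 7 = 5 ∨ w.1 % 7 = 6 := by omega
        have hadj : ∀ dv : ℕ, ∀ h : dv < 7*r, (dv % 7 = 1 ∨ dv % 7 = 4) →
            (B7rC6Adj r dv w.1 ∨ B7rC6Adj r w.1 dv) → ∃ d : Fin (7*r),
            ∃ _ : (d.1 % 7 = 1 ∨ d.1 % 7 = 4), (B7rC6 r).Adj d w := by
          intro dv hlt hmod hrel
          refine ⟨⟨dv, hlt⟩, hmod, ?_⟩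
          rw [B7rC6, SimpleGraph.fromRel_adj]
          exact ⟨fun h => by have := congrArg Fin.val h; simp at this; omega, hrel⟩
        rcases hc with h0 | h2 | h3 | h5 | h6
        · exact hadj (7*i+1) (by omega) (by omega)
            (Or.inr (Or.inr ⟨i, hir, Or.inl ⟨by omega, by omega⟩⟩))
        · exact hadj (7*i+1) (by omega) (by omega)
            (Or.inl (Or.inr ⟨i, hir, Or.inr (Or.inl ⟨0, by omega, by omega, by omega⟩)⟩))
        · exact hadj (7*i+4) (by omega) (by omega)
            (Or.inr (Or.inr ⟨i, hir, Or.inr (Or.inl ⟨2, by omega, by omega, by omega⟩)⟩))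
        · exact hadj (7*i+4) (by omega) (by omega)
            (Or.inl (Or.inr ⟨i, hir, Or.inr (Or.inl ⟨3, by omega, by omega, by omega⟩)⟩))
        · exact hadj (7*i+1) (by omega) (by omega)
            (Or.inl (Or.inr ⟨i, hir, Or.inr (Or.inr ⟨by omega, by omega⟩)⟩))
    intro H hH ⟨f, _⟩
    have : Nonempty (Fin H.1) := hH.1.nonempty
    obtain ⟨a⟩ := this
    exact (f a).2 (hcov.ge (Set.mem_univ _))
  · -- cardinality
    have hrange : {v : Fin (7*r) | v.1 % 7 = 1 ∨ v.1 % 7 = 4} = Set.range (gfun r hr) := by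
      ext v
      simp only [Set.mem_setOf_eq, Set.mem_range]
      constructor
      · intro h
        have hvlt := v.isLt
        rcases h with h | h
        · exact ⟨(⟨v.1/7, by omega⟩, ⟨0, by omega⟩), Fin.ext (by simp [gfun]; omega)⟩
        · exact ⟨(⟨v.1/7, by omega⟩, ⟨1, by omega⟩), Fin.ext (by simp [gfun]; omega)⟩
      · rintro ⟨⟨a, b⟩, rfl⟩
        have := b.isLt
        show (7*a.1+1+3*b.1) % 7 = 1 ∨ (7*a.1+1+3*b.1) % 7 = 4
        obtain h | h : b.1 = 0 ∨ b.1 = 1 := by omega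
        · left; omega
        · right; omega
    rw [hrange, ← Set.image_univ, Set.ncard_image_of_injective _ ?_, Set.ncard_univ]
    · simp [Nat.card_eq_fintype_card]; ring
    · intro p q hpq
      have h : 7*p.1.1+1+3*p.2.1 = 7*q.1.1+1+3*q.2.1 := congrArg Fin.val hpq
      have := p.1.isLt; have := p.2.isLt; have := q.1.isLt; have := q.2.isLt
      have h1 : p.1 = q.1 := Fin.ext (by omega)
      have h2 : p.2 = q.2 := Fin.ext (by omega)
      exact Prod.ext h1 h2

theorem stmt_18 (r : ℕ) (hr : 1 ≤ r) :
    (B7rC6 r).isolationNumber (EkFamily 2) = 2 * r ∧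
    7 * (B7rC6 r).isolationNumber (EkFamily 2) = 2 * Fintype.card (Fin (7 * r)) := by
  obtain ⟨D₀, hiso, hcard⟩ := upperBound r hr
  have hmem : 2*r ∈ Set.ncard '' {D : Set (Fin (7*r)) | (B7rC6 r).IsIsolatingSet (EkFamily 2) D} :=
    ⟨D₀, hiso, hcard⟩
  have h1 : (B7rC6 r).isolationNumber (EkFamily 2) ≤ 2*r := Nat.sInf_le hmem
  have h2 : 2*r ≤ (B7rC6 r).isolationNumber (EkFamily 2) :=
    le_csInf ⟨_, hmem⟩ (by rintro n ⟨D, hD, rfl⟩; exact lowerBound r D hD)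
  have heq : (B7rC6 r).isolationNumber (EkFamily 2) = 2*r := le_antisymm h1 h2
  exact ⟨heq, by rw [heq, Fintype.card_fin]; ring⟩
end
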